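/- arXiv:2007.09636 — 4 statements merged into one kernel-verified Lean document; each statement's English description precedes it below -/
import Mathlib

section
/- (Lemma 3.1) Suppose Assumptions 2.1 and 3.1 hold. Then there exists τ ∈ (0, π/2) such that arg( d(r)/d̃(r) ) ∈ [0, τ] for all r > r₁*. -/
open Filter Set MeasureTheory

noncomputable def dtil (αt : ℝ → ℝ) (r : ℝ) : ℂ := 1 + Complex.I * (αt r : ℂ)

noncomputable def afun (r₁ : ℝ) (αt : ℝ → ℝ) (r : ℝ) : ℝ :=
  if r₁ < r then r * deriv αt r + αt r else 0

noncomputable def dfun (r₁ : ℝ) (αt : ℝ → ℝ) (r : ℝ) : ℂ :=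
  1 + Complex.I * (afun r₁ αt r : ℂ)

/-- Assumption 2.1: the profile function `αt` vanishes on `[0, r₁]`, is continuous,
positive beyond `r₁`, non-decreasing, and twice continuously differentiable on `(r₁, ∞)`
with continuous extensions of itself and its first two derivatives to `[r₁, ∞)`. -/
structure Assumption21 (r₁ : ℝ) (αt : ℝ → ℝ) : Prop where
  r₁_pos : 0 < r₁
  nonneg : ∀ r, 0 ≤ r → 0 ≤ αt r
  eq_zero : ∀ r, 0 ≤ r → r ≤ r₁ → αt r = 0
  cont : ContinuousOn αt (Set.Ici 0)
  pos : ∀ r, r₁ < r → 0 < αt r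
  mono : MonotoneOn αt (Set.Ici 0)
  smooth : ContDiffOn ℝ 2 αt (Set.Ioi r₁)
  ext0 : ∃ L : ℝ, Tendsto αt (nhdsWithin r₁ (Set.Ioi r₁)) (nhds L)
  ext1 : ∃ L : ℝ, Tendsto (deriv αt) (nhdsWithin r₁ (Set.Ioi r₁)) (nhds L)
  ext2 : ∃ L : ℝ, Tendsto (deriv (deriv αt)) (nhdsWithin r₁ (Set.Ioi r₁)) (nhds L)

/-- Assumption 3.1: (a) `d̃·|d|/(|d̃|·d) → 1` as `r → ∞`, and
(b) the derivatives of `d̃/|d̃|` and `d/|d|` tend to `0` as `r → ∞`. -/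
structure Assumption31 (r₁ : ℝ) (αt : ℝ → ℝ) : Prop where
  parta : Tendsto (fun r => dtil αt r * (‖dfun r₁ αt r‖ : ℂ) /
      ((‖dtil αt r‖ : ℂ) * dfun r₁ αt r)) atTop (nhds 1)
  partb1 : Tendsto (deriv (fun r => dtil αt r / (‖dtil αt r‖ : ℂ))) atTop (nhds 0)
  partb2 : Tendsto (deriv (fun r => dfun r₁ αt r / (‖dfun r₁ αt r‖ : ℂ))) atTop (nhds 0)

/-!
For `r > r₁`, with `a = α(r)` and `b = α̃(r)`, the quotient `d/d̃ = (1 + i a)/(1 + i b)` has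
argument `arctan ((a - b)/(1 + a b))`, and `a - b = r α̃'(r) ≥ 0` by monotonicity; hence the
argument lies in `[0, arctan (r α̃'(r))]`. As `r → ∞`, Assumption 3.1(a) forces the argument to
tend to `0`, since `d̃|d|/(|d̃|d)` is a positive multiple of `(d/d̃)⁻¹`. On the remaining bounded
range `(r₁, R]`, `α̃'` is bounded because it extends continuously to `r₁`, so `arctan (r α̃'(r))`
stays below some `arctan (R M) < π/2`.
-/

namespace Complex

lemma one_add_I_mul_ofReal_ne_zero (x : ℝ) : 1 + I * x ≠ 0 := by
  intro h
  simpa using congrArg re h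

lemma arg_eq_arctan_of_re_pos {z : ℂ} (hz : 0 < z.re) : z.arg = Real.arctan (z.im / z.re) := by
  obtain ⟨hlo, hhi⟩ := abs_lt.mp (abs_arg_lt_pi_div_two_iff.mpr (Or.inl hz))
  rw [← tan_arg, Real.arctan_tan hlo hhi]

lemma re_one_add_I_mul_div (a b : ℝ) :
    ((1 + I * a) / (1 + I * b)).re = (1 + a * b) / (1 + b ^ 2) := by
  simp only [div_re, add_re, one_re, mul_re, I_re, ofReal_re, zero_mul, I_im, ofReal_im, mul_zero,
    sub_self, add_zero, mul_one, normSq_apply, add_im, one_im, mul_im, one_mul, zero_add, one_div]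
  ring

lemma im_one_add_I_mul_div (a b : ℝ) :
    ((1 + I * a) / (1 + I * b)).im = (a - b) / (1 + b ^ 2) := by
  simp only [div_im, add_im, one_im, mul_im, I_re, ofReal_im, mul_zero, I_im, ofReal_re, one_mul,
    zero_add, add_re, one_re, mul_re, zero_mul, sub_self, add_zero, mul_one, normSq_apply]
  ring

lemma re_one_add_I_mul_div_pos {a b : ℝ} (hab : 0 < 1 + a * b) :
    0 < ((1 + I * a) / (1 + I * b)).re := by
  rw [re_one_add_I_mul_div]
  positivity

lemma arg_one_add_I_mul_div {a b : ℝ} (hab : 0 < 1 + a * b) :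
    ((1 + I * a) / (1 + I * b)).arg = Real.arctan ((a - b) / (1 + a * b)) := by
  rw [arg_eq_arctan_of_re_pos (re_one_add_I_mul_div_pos hab), re_one_add_I_mul_div,
    im_one_add_I_mul_div]
  congr 1
  field_simp

lemma arg_one_add_I_mul_div_mem_Icc {a b : ℝ} (hb : 0 ≤ b) (hba : b ≤ a) :
    ((1 + I * a) / (1 + I * b)).arg ∈ Icc 0 (Real.arctan (a - b)) := by
  have hab : 1 ≤ 1 + a * b := by nlinarith
  rw [arg_one_add_I_mul_div (by linarith)]
  constructor
  · exact Real.arctan_nonneg.mpr (div_nonneg (by linarith) (by linarith))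
  · exact Real.arctan_mono (div_le_self (by linarith) hab)

lemma arg_mul_norm_div_norm_mul {z w : ℂ} (hz : z ≠ 0) (hw : w ≠ 0) (h : (z / w).arg ≠ Real.pi) :
    (w * ‖z‖ / (‖w‖ * z)).arg = -(z / w).arg := by
  have hratio : w * ‖z‖ / (‖w‖ * z) = ((‖z‖ / ‖w‖ : ℝ) : ℂ) * (z / w)⁻¹ := by
    push_cast
    field_simp
  rw [hratio, arg_real_mul _ (by positivity), arg_inv, if_neg h]

end Complex

lemma ContinuousOn.bddAbove_image_Ioc_of_tendsto {f : ℝ → ℝ} {a b L : ℝ}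
    (hf : ContinuousOn f (Ioc a b)) (hL : Tendsto f (nhdsWithin a (Ioi a)) (nhds L)) :
    BddAbove (f '' Ioc a b) := by
  classical
  have hcont : ContinuousOn (Function.update f a L) (Icc a b) := by
    refine continuousOn_update_iff.mpr ⟨?_, fun _ => ?_⟩ <;> rw [Icc_sdiff_left]
    · exact hf
    · exact hL.mono_left (nhdsWithin_mono _ Ioc_subset_Ioi_self)
  refine (isCompact_Icc.bddAbove_image hcont).mono ?_
  rintro _ ⟨x, hx, rfl⟩
  exact ⟨x, Ioc_subset_Icc_self hx, Function.update_of_ne hx.1.ne' _ _⟩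

lemma afun_sub_of_lt {r₁ r : ℝ} (αt : ℝ → ℝ) (hr : r₁ < r) :
    afun r₁ αt r - αt r = r * deriv αt r := by
  simp [afun, hr]

namespace Assumption21

variable {r₁ : ℝ} {αt : ℝ → ℝ}

lemma deriv_nonneg (h : Assumption21 r₁ αt) {r : ℝ} (hr : r₁ < r) : 0 ≤ deriv αt r := by
  rw [← derivWithin_of_mem_nhds (Ici_mem_nhds (h.r₁_pos.trans hr))]
  exact h.mono.derivWithin_nonneg

lemma le_afun (h : Assumption21 r₁ αt) {r : ℝ} (hr : r₁ < r) : αt r ≤ afun r₁ αt r := by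
  have := mul_nonneg (h.r₁_pos.trans hr).le (h.deriv_nonneg hr)
  linarith [afun_sub_of_lt αt hr]

lemma bddAbove_deriv_image_Ioc (h : Assumption21 r₁ αt) (R : ℝ) :
    BddAbove (deriv αt '' Ioc r₁ R) := by
  obtain ⟨L, hL⟩ := h.ext1
  have hcont := h.smooth.continuousOn_deriv_of_isOpen isOpen_Ioi (by norm_num)
  exact ContinuousOn.bddAbove_image_Ioc_of_tendsto (hcont.mono Ioc_subset_Ioi_self) hL

lemma arg_dfun_div_dtil_mem_Icc (h : Assumption21 r₁ αt) {r : ℝ} (hr : r₁ < r) :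
    (dfun r₁ αt r / dtil αt r).arg ∈ Icc 0 (Real.arctan (r * deriv αt r)) := by
  rw [← afun_sub_of_lt αt hr]
  exact Complex.arg_one_add_I_mul_div_mem_Icc (h.nonneg r (h.r₁_pos.trans hr).le) (h.le_afun hr)

lemma arg_dfun_div_dtil_ne_pi (h : Assumption21 r₁ αt) {r : ℝ} (hr : r₁ < r) :
    (dfun r₁ αt r / dtil αt r).arg ≠ Real.pi := by
  have := (h.arg_dfun_div_dtil_mem_Icc hr).2.trans_lt (Real.arctan_lt_pi_div_two _)
  linarith [Real.pi_pos]

end Assumption21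

lemma Assumption31.tendsto_arg_dfun_div_dtil {r₁ : ℝ} {αt : ℝ → ℝ} (h31 : Assumption31 r₁ αt)
    (h21 : Assumption21 r₁ αt) :
    Tendsto (fun r => (dfun r₁ αt r / dtil αt r).arg) atTop (nhds 0) := by
  have harg : ContinuousAt Complex.arg 1 :=
    Complex.continuousAt_arg (by simp [Complex.mem_slitPlane_iff])
  have hlim := (harg.tendsto.comp h31.parta).neg
  rw [Complex.arg_one, neg_zero] at hlim
  refine hlim.congr' ?_
  filter_upwards [eventually_gt_atTop r₁] with r hr
  rw [Function.comp_apply, Complex.arg_mul_norm_div_norm_mul (z := dfun r₁ αt r) (w := dtil αt r)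
    (Complex.one_add_I_mul_ofReal_ne_zero _) (Complex.one_add_I_mul_ofReal_ne_zero _)
    (h21.arg_dfun_div_dtil_ne_pi hr), neg_neg]

/-- Lemma 3.1: under Assumptions 2.1 and 3.1 there exists `τ ∈ (0, π/2)` such that
`arg(d(r)/d̃(r)) ∈ [0, τ]` for all `r > r₁*`. -/
theorem stmt0 (r₁ : ℝ) (αt : ℝ → ℝ)
    (h21 : Assumption21 r₁ αt) (h31 : Assumption31 r₁ αt) :
    ∃ τ ∈ Set.Ioo 0 (Real.pi / 2), ∀ r, r₁ < r →
      (dfun r₁ αt r / dtil αt r).arg ∈ Set.Icc 0 τ := by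
  have hπ := Real.pi_pos
  obtain ⟨R, hR⟩ := eventually_atTop.mp
    ((h31.tendsto_arg_dfun_div_dtil h21).eventually_lt_const (by positivity : 0 < Real.pi / 4))
  obtain ⟨M, hM⟩ := h21.bddAbove_deriv_image_Ioc R
  refine ⟨max (Real.pi / 4) (Real.arctan (R * M)),
    ⟨lt_max_of_lt_left (by positivity), max_lt (by linarith) (Real.arctan_lt_pi_div_two _)⟩,
    fun r hr => ⟨(h21.arg_dfun_div_dtil_mem_Icc hr).1, ?_⟩⟩
  rcases le_or_gt r R with hrR | hRr
  · have hslope : r * deriv αt r ≤ R * M :=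
      mul_le_mul hrR (hM ⟨r, ⟨hr, hrR⟩, rfl⟩) (h21.deriv_nonneg hr)
        ((h21.r₁_pos.trans hr).le.trans hrR)
    exact le_max_of_le_right
      ((h21.arg_dfun_div_dtil_mem_Icc hr).2.trans (Real.arctan_mono hslope))
  · exact le_max_of_le_left (hR r hRr.le).le
end

section
/- (Lemma 3.2) Let Ω ⊆ ℝ³ be measurable and let B_n denote the open ball of radius n centered at the origin. Let η₁ : Ω → ℂ be measurable with η₁ essentially bounded on Ω ∩ B_n for every n ∈ ℕ. Let Y be a complex Hilbert space together with a linear map ι : Y → L²(Ω) such that (i) there is a constant C > 0 with ‖η₁·ι(u)‖_{L²(Ω)} ≤ C‖u‖_Y for all u ∈ Y, and (ii) for each n ∈ ℕ the restriction operator K_n : Y → L²(Ω ∩ B_n), u ↦ (ι u)|_{Ω ∩ B_n}, is a compact operator. Let η₂ ∈ L^∞(Ω) satisfy lim_{r→∞} ‖η₂‖_{L^∞(Ω \ B_r)} = 0. Then the multiplication-and-embedding operator K : Y → L²(Ω), u ↦ η₁·η₂·ι(u), is compact. -/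
open Filter MeasureTheory Metric Set
open scoped ENNReal NNReal

/-!
The compact operators `Kₙ` control `u ↦ η₁ η₂ ι u` on `Ω ∩ Bₙ`, since `η₁ η₂` is bounded there;
on `Ω \ Bₙ` the operator is at most `‖η₂‖_{L^∞(Ω \ Bₙ)} · C · ‖u‖`, which is small for large `n`.
A linear map that is dominated by a compact operator up to an arbitrarily small multiple of `‖u‖`
maps the unit ball to a totally bounded set, hence is compact.
-/

section CompactDomination

variable {𝕜 E F : Type*} [NontriviallyNormedField 𝕜] [SeminormedAddCommGroup E] [NormedSpace 𝕜 E]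
  [NormedAddCommGroup F] [NormedSpace 𝕜 F] [CompleteSpace F]
  {ι : Type*} {G : ι → Type*} [∀ i, SeminormedAddCommGroup (G i)] [∀ i, NormedSpace 𝕜 (G i)]

theorem isCompactOperator_of_forall_enorm_le (K : E →ₗ[𝕜] F) (T : ∀ i, E →ₗ[𝕜] G i)
    (hT : ∀ i, IsCompactOperator (T i))
    (h : ∀ ε : ℝ≥0, 0 < ε → ∃ i, ∃ A : ℝ≥0, ∀ u, ‖K u‖ₑ ≤ A * ‖T i u‖ₑ + ε * ‖u‖ₑ) :
    IsCompactOperator K := by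
  rw [isCompactOperator_iff_isCompact_closure_image_closedBall K zero_lt_one]
  refine (TotallyBounded.closure ?_).isCompact_of_isClosed isClosed_closure
  refine Metric.totallyBounded_iff.2 fun ε hε => ?_
  obtain ⟨i, A, hA⟩ := h (ε / 4).toNNReal (by positivity)
  have hA' : ∀ u, ‖K u‖ ≤ A * ‖T i u‖ + ε / 4 * ‖u‖ := fun u => by
    have hAu := hA u
    simp only [enorm_eq_nnnorm] at hAu
    norm_cast at hAu
    simpa [Real.coe_toNNReal _ (by positivity : 0 ≤ ε / 4)] using NNReal.coe_le_coe.2 hAu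
  obtain ⟨L, hL, hTL⟩ := (hT i).image_closedBall_subset_compact 1
  have hTi : TotallyBounded (T i '' closedBall 0 1) := hL.totallyBounded.subset hTL
  obtain ⟨t, ht, htfin, hcover⟩ := exists_subset_image_finite_and.1
    (finite_approx_of_totallyBounded hTi (ε / (2 * (A + 1))) (by positivity))
  refine ⟨K '' t, htfin.image K, ?_⟩
  rintro _ ⟨u, hu, rfl⟩
  obtain ⟨_, ⟨v, hv, rfl⟩, hdist⟩ := mem_iUnion₂.1 (hcover (mem_image_of_mem _ hu))
  refine mem_iUnion₂.2 ⟨K v, mem_image_of_mem K hv, ?_⟩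
  have hAT : A * ‖T i (u - v)‖ < ε / 2 := by
    have hTuv : ‖T i (u - v)‖ < ε / (2 * (A + 1)) := by rwa [map_sub, ← dist_eq_norm]
    calc (A : ℝ) * ‖T i (u - v)‖ ≤ (A + 1) * ‖T i (u - v)‖ := by gcongr; linarith
      _ < (A + 1) * (ε / (2 * (A + 1))) := by gcongr
      _ = ε / 2 := by field_simp
  have huv : ‖u - v‖ ≤ 1 + 1 :=
    norm_sub_le_of_le (mem_closedBall_zero_iff.1 hu) (mem_closedBall_zero_iff.1 (ht hv))
  rw [mem_ball, dist_eq_norm, ← map_sub]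
  calc ‖K (u - v)‖ ≤ A * ‖T i (u - v)‖ + ε / 4 * ‖u - v‖ := hA' _
    _ < ε / 2 + ε / 4 * (1 + 1) := add_lt_add_of_lt_of_le hAT (by gcongr)
    _ = ε := by ring

end CompactDomination

section SplitEstimate

variable {α 𝕜 E : Type*} [MeasurableSpace α] [NormedAddCommGroup E] {μ ν : Measure α} {p : ℝ≥0∞}

theorem eLpNorm_add_measure_le (f : α → E) (hp1 : 1 ≤ p) (hp : p ≠ ∞) :
    eLpNorm f p (μ + ν) ≤ eLpNorm f p μ + eLpNorm f p ν := by
  have hp0 : p ≠ 0 := (zero_lt_one.trans_le hp1).ne'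
  simp_rw [eLpNorm_eq_lintegral_rpow_enorm_toReal hp0 hp, lintegral_add_measure]
  have hp1' : 1 ≤ p.toReal := by simpa using ENNReal.toReal_mono hp hp1
  exact ENNReal.rpow_add_le_add_rpow _ _ (by positivity) (by simpa using inv_le_one_of_one_le₀ hp1')

theorem eLpNorm_le_restrict_add_restrict_compl (f : α → E) {s : Set α} (hs : MeasurableSet s)
    (hp1 : 1 ≤ p) (hp : p ≠ ∞) :
    eLpNorm f p μ ≤ eLpNorm f p (μ.restrict s) + eLpNorm f p (μ.restrict sᶜ) := by
  conv_lhs => rw [← Measure.restrict_add_restrict_compl (μ := μ) hs]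
  exact eLpNorm_add_measure_le f hp1 hp

variable [NormedField 𝕜] [NormedSpace 𝕜 E]

theorem eLpNorm_smul_smul_le {s : Set α} (hs : MeasurableSet s) (hp1 : 1 ≤ p) (hp : p ≠ ∞)
    {f g : α → 𝕜} {h : α → E} (hf : AEStronglyMeasurable f μ) (hg : AEStronglyMeasurable g μ)
    (hh : AEStronglyMeasurable h μ) :
    eLpNorm (f • g • h) p μ ≤
      eLpNorm f ∞ (μ.restrict s) * eLpNorm g ∞ μ * eLpNorm h p (μ.restrict s) +
        eLpNorm g ∞ (μ.restrict sᶜ) * eLpNorm (f • h) p μ := by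
  refine (eLpNorm_le_restrict_add_restrict_compl _ hs hp1 hp).trans (add_le_add ?_ ?_)
  · calc eLpNorm (f • g • h) p (μ.restrict s)
        ≤ eLpNorm f ∞ (μ.restrict s) * (eLpNorm g ∞ (μ.restrict s) * eLpNorm h p (μ.restrict s)) :=
          (eLpNorm_smul_le_eLpNorm_top_mul_eLpNorm p (hg.smul hh).restrict f).trans
            (by gcongr; exact eLpNorm_smul_le_eLpNorm_top_mul_eLpNorm p hh.restrict g)
      _ ≤ eLpNorm f ∞ (μ.restrict s) * eLpNorm g ∞ μ * eLpNorm h p (μ.restrict s) := by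
          rw [← mul_assoc]; gcongr; exact Measure.restrict_le_self
  · rw [smul_comm f g h]
    exact (eLpNorm_smul_le_eLpNorm_top_mul_eLpNorm p (hf.smul hh).restrict g).trans
      (by gcongr; exact Measure.restrict_le_self)

end SplitEstimate

theorem stmt4_general
    (Ω : Set (EuclideanSpace ℝ (Fin 3)))
    (η₁ η₂ : EuclideanSpace ℝ (Fin 3) → ℂ)
    (hη₁meas : Measurable η₁)
    (hη₁loc : ∀ n : ℕ,
      eLpNorm η₁ ⊤ (volume.restrict (Ω ∩ Metric.ball (0 : EuclideanSpace ℝ (Fin 3)) n)) < ⊤)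
    (hη₂meas : Measurable η₂)
    (hη₂bdd : eLpNorm η₂ ⊤ (volume.restrict Ω) < ⊤)
    (hη₂lim : Tendsto
      (fun r : ℝ =>
        eLpNorm η₂ ⊤ (volume.restrict (Ω \ Metric.ball (0 : EuclideanSpace ℝ (Fin 3)) r)))
      atTop (nhds 0))
    (Y : Type*) [NormedAddCommGroup Y] [InnerProductSpace ℂ Y]
    (ι : Y →ₗ[ℂ] Lp ℂ 2 (volume.restrict Ω))
    (C : ℝ)
    (hbound : ∀ u : Y,
      eLpNorm (fun x => η₁ x * (ι u : EuclideanSpace ℝ (Fin 3) → ℂ) x) 2 (volume.restrict Ω)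
        ≤ ENNReal.ofReal (C * ‖u‖))
    (Kres : ∀ n : ℕ,
      Y →ₗ[ℂ] Lp ℂ 2 (volume.restrict (Ω ∩ Metric.ball (0 : EuclideanSpace ℝ (Fin 3)) n)))
    (hKres : ∀ (n : ℕ) (u : Y),
      (Kres n u : EuclideanSpace ℝ (Fin 3) → ℂ)
        =ᵐ[volume.restrict (Ω ∩ Metric.ball (0 : EuclideanSpace ℝ (Fin 3)) n)]
          (ι u : EuclideanSpace ℝ (Fin 3) → ℂ))
    (hKcomp : ∀ n : ℕ, IsCompactOperator (Kres n))
    (K : Y →ₗ[ℂ] Lp ℂ 2 (volume.restrict Ω))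
    (hK : ∀ u : Y,
      (K u : EuclideanSpace ℝ (Fin 3) → ℂ) =ᵐ[volume.restrict Ω]
        fun x => η₁ x * (η₂ x * (ι u : EuclideanSpace ℝ (Fin 3) → ℂ) x)) :
    IsCompactOperator K := by
  refine isCompactOperator_of_forall_enorm_le K Kres hKcomp fun ε hε => ?_
  obtain ⟨r, hr⟩ := eventually_atTop.1 <|
    (ENNReal.Tendsto.mul_const hη₂lim (.inr ENNReal.ofReal_ne_top)).eventually_lt_const
      (show 0 * ENNReal.ofReal C < ε by simpa using hε)
  set n := ⌈r⌉₊
  have hball : MeasurableSet (ball (0 : EuclideanSpace ℝ (Fin 3)) n) := isOpen_ball.measurableSet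
  refine ⟨n, (eLpNorm η₁ ⊤ (volume.restrict (Ω ∩ ball 0 n)) *
    eLpNorm η₂ ⊤ (volume.restrict Ω)).toNNReal, fun u => ?_⟩
  rw [ENNReal.coe_toNNReal (ENNReal.mul_ne_top (hη₁loc n).ne hη₂bdd.ne)]
  have hsplit := eLpNorm_smul_smul_le (μ := volume.restrict Ω) hball one_le_two ENNReal.ofNat_ne_top
    hη₁meas.aestronglyMeasurable hη₂meas.aestronglyMeasurable (Lp.aestronglyMeasurable (ι u))
  rw [Measure.restrict_restrict hball, Measure.restrict_restrict hball.compl, inter_comm,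
    ← sdiff_eq_compl_inter] at hsplit
  have htail_le : eLpNorm η₂ ⊤ (volume.restrict (Ω \ ball 0 n)) *
      eLpNorm (η₁ • ⇑(ι u)) 2 (volume.restrict Ω) ≤ ε * ‖u‖ₑ :=
    calc _ ≤ eLpNorm η₂ ⊤ (volume.restrict (Ω \ ball 0 n)) * (ENNReal.ofReal C * ‖u‖ₑ) := by
          rw [← ofReal_norm, ← ENNReal.ofReal_mul' (norm_nonneg u)]
          gcongr
          exact hbound u
      _ ≤ ε * ‖u‖ₑ := by
          rw [← mul_assoc]
          gcongr
          exact (hr n (Nat.le_ceil r)).le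
  calc ‖K u‖ₑ = eLpNorm (η₁ • η₂ • ⇑(ι u)) 2 (volume.restrict Ω) := by
        rw [Lp.enorm_def, eLpNorm_congr_ae (hK u)]; rfl
    _ ≤ _ := hsplit
    _ ≤ _ := by
        rw [← eLpNorm_congr_ae (hKres n u), ← Lp.enorm_def]
        exact add_le_add le_rfl htail_le

/-- Lemma 3.2: let `Ω ⊆ ℝ³` be measurable, `η₁` measurable and essentially bounded on each
`Ω ∩ Bₙ`, `Y` a Hilbert space with a linear map `ι : Y → L²(Ω)` such that
`‖η₁·ι(u)‖_{L²(Ω)} ≤ C‖u‖` and such that each restriction `Kₙ : Y → L²(Ω ∩ Bₙ)` (given as a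
linear map agreeing a.e. with `ι`) is compact, and `η₂ ∈ L^∞(Ω)` with
`‖η₂‖_{L^∞(Ω \ B_r)} → 0` as `r → ∞`. Then the multiplication-and-embedding operator
`K : Y → L²(Ω)`, `u ↦ η₁·η₂·ι(u)`, is compact. -/
theorem stmt4
    (Ω : Set (EuclideanSpace ℝ (Fin 3))) (hΩ : MeasurableSet Ω)
    (η₁ η₂ : EuclideanSpace ℝ (Fin 3) → ℂ)
    (hη₁meas : Measurable η₁)
    (hη₁loc : ∀ n : ℕ,
      eLpNorm η₁ ⊤ (volume.restrict (Ω ∩ Metric.ball (0 : EuclideanSpace ℝ (Fin 3)) n)) < ⊤)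
    (hη₂meas : Measurable η₂)
    (hη₂bdd : eLpNorm η₂ ⊤ (volume.restrict Ω) < ⊤)
    (hη₂lim : Tendsto
      (fun r : ℝ =>
        eLpNorm η₂ ⊤ (volume.restrict (Ω \ Metric.ball (0 : EuclideanSpace ℝ (Fin 3)) r)))
      atTop (nhds 0))
    (Y : Type*) [NormedAddCommGroup Y] [InnerProductSpace ℂ Y] [CompleteSpace Y]
    (ι : Y →ₗ[ℂ] Lp ℂ 2 (volume.restrict Ω))
    (C : ℝ) (hC : 0 < C)
    (hbound : ∀ u : Y,
      eLpNorm (fun x => η₁ x * (ι u : EuclideanSpace ℝ (Fin 3) → ℂ) x) 2 (volume.restrict Ω)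
        ≤ ENNReal.ofReal (C * ‖u‖))
    (Kres : ∀ n : ℕ,
      Y →ₗ[ℂ] Lp ℂ 2 (volume.restrict (Ω ∩ Metric.ball (0 : EuclideanSpace ℝ (Fin 3)) n)))
    (hKres : ∀ (n : ℕ) (u : Y),
      (Kres n u : EuclideanSpace ℝ (Fin 3) → ℂ)
        =ᵐ[volume.restrict (Ω ∩ Metric.ball (0 : EuclideanSpace ℝ (Fin 3)) n)]
          (ι u : EuclideanSpace ℝ (Fin 3) → ℂ))
    (hKcomp : ∀ n : ℕ, IsCompactOperator (Kres n))
    (K : Y →ₗ[ℂ] Lp ℂ 2 (volume.restrict Ω))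
    (hK : ∀ u : Y,
      (K u : EuclideanSpace ℝ (Fin 3) → ℂ) =ᵐ[volume.restrict Ω]
        fun x => η₁ x * (η₂ x * (ι u : EuclideanSpace ℝ (Fin 3) → ℂ) x)) :
    IsCompactOperator K :=
  stmt4_general Ω η₁ η₂ hη₁meas hη₁loc hη₂meas hη₂bdd hη₂lim Y ι C hbound Kres hKres hKcomp K hK
end

section
/- (Lemma 6.1) Let 0 < r₁* < r₂*, let Ω_e ⊆ ℝ³ be a measurable subset of the open ball B_{r₂*} of radius r₂* centered at the origin, and let (r_n)_{n∈ℕ} ⊂ (r₁*, r₂*) be a monotonically increasing sequence with limit r₂*. Let η₁ : Ω_e → ℂ be measurable with η₁ essentially bounded on Ω_e ∩ B_{r_n} for every n ∈ ℕ. Let Y be a complex Hilbert space together with a linear map ι : Y → L²(Ω_e) such that (i) there is a constant C > 0 with ‖η₁·ι(u)‖_{L²(Ω_e)} ≤ C‖u‖_Y for all u ∈ Y, and (ii) for each n ∈ ℕ the restriction operator K_n : Y → L²(Ω_e ∩ B_{r_n}), u ↦ (ι u)|_{Ω_e ∩ B_{r_n}}, is a compact operator. Let η₂ ∈ L^∞(Ω_e)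 satisfy lim_{r→r₂*⁻} ‖η₂‖_{L^∞(Ω_e \ B_r)} = 0. Then the multiplication-and-embedding operator K : Y → L²(Ω_e), u ↦ η₁·η₂·ι(u), is compact. -/
/-!
Truncate at radius `rₙ`: `Tₙ u = 1_{B_{rₙ}} η₁ η₂ ι u` is the compact restriction `Kₙ` followed by
multiplication by `η₁ η₂ ∈ L^∞(Ω ∩ B_{rₙ})` and extension by zero, so `Tₙ` is compact. On the
complement, `K u - Tₙ u = η₂ · (η₁ ι u)` with `‖η₁ ι u‖ ≤ C ‖u‖`, hence
`‖K - Tₙ‖ ≤ C ‖η₂‖_{L^∞(Ω \ B_{rₙ})} → 0`, and compact operators are closed in operator norm.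
-/

open Filter MeasureTheory Topology
open scoped ENNReal

theorem LinearMap.isCompactOperator_of_tendsto_of_norm_sub_le
    {ι 𝕜 E F : Type*} [NontriviallyNormedField 𝕜] [SeminormedAddCommGroup E] [NormedSpace 𝕜 E]
    [NormedAddCommGroup F] [NormedSpace 𝕜 F] [CompleteSpace F] {l : Filter ι} [l.NeBot]
    {K : E →ₗ[𝕜] F} {T : ι → E →ₗ[𝕜] F} (hT : ∀ i, IsCompactOperator (T i))
    {ε : ι → ℝ} (hε : Tendsto ε l (𝓝 0)) (hKT : ∀ i u, ‖K u - T i u‖ ≤ ε i * ‖u‖) :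
    IsCompactOperator K := by
  obtain ⟨i₀⟩ := l.nonempty_of_neBot
  let Tc (i : ι) : E →L[𝕜] F := ⟨T i, (hT i).continuous⟩
  let Kc : E →L[𝕜] F := (K - T i₀).mkContinuous (ε i₀) (hKT i₀) + Tc i₀
  have hKc : ∀ u, Kc u = K u := fun u => by simp [Kc, Tc]
  have hTc : Tendsto Tc l (𝓝 Kc) := by
    rw [tendsto_iff_norm_sub_tendsto_zero]
    refine squeeze_zero (fun _ => norm_nonneg _) (fun i => ?_)
      (by simpa using hε.max (tendsto_const_nhds (x := (0 : ℝ))))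
    refine ContinuousLinearMap.opNorm_le_bound _ (le_max_right _ _) fun u => ?_
    rw [show (Tc i - Kc) u = Tc i u - Kc u from rfl, norm_sub_rev, hKc]
    exact (hKT i u).trans (by gcongr; exact le_max_left _ _)
  simpa [funext hKc] using isCompactOperator_of_tendsto hTc (Eventually.of_forall hT)

namespace MeasureTheory

variable {α 𝕜 : Type*} [MeasurableSpace α] [NormedField 𝕜] {p : ℝ≥0∞} {μ ν : Measure α}
  {s : Set α} {g : α → 𝕜}

theorem eLpNorm_indicator_mul_le (hs : MeasurableSet s) (hsν : μ.restrict s ≤ ν) (h : α → 𝕜)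
    {f : α → 𝕜} (hf : AEStronglyMeasurable f ν) :
    eLpNorm (s.indicator (h * f)) p μ ≤ eLpNorm h ∞ (μ.restrict s) * eLpNorm f p ν := by
  rw [eLpNorm_indicator_eq_eLpNorm_restrict hs]
  exact (eLpNorm_smul_le_eLpNorm_top_mul_eLpNorm p (hf.mono_measure hsν) h).trans (by gcongr)

theorem MemLp.indicator_mul (hs : MeasurableSet s) (hsν : μ.restrict s ≤ ν)
    (hg : MemLp g ∞ (μ.restrict s)) {f : α → 𝕜} (hf : MemLp f p ν) :
    MemLp (s.indicator (g * f)) p μ :=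
  (memLp_indicator_iff_restrict hs).2 ((hf.mono_measure hsν).mul hg)

theorem indicator_mul_ae_eq_of_ae_eq (hs : MeasurableSet s) (hsν : μ.restrict s ≤ ν)
    {f₁ f₂ : α → 𝕜} (h : f₁ =ᵐ[ν] f₂) : s.indicator (g * f₁) =ᵐ[μ] s.indicator (g * f₂) := by
  have h' : ∀ᵐ x ∂μ, x ∈ s → f₁ x = f₂ x :=
    (ae_restrict_iff' hs).1 (Measure.absolutelyContinuous_of_le hsν |>.ae_le h)
  filter_upwards [h'] with x hx
  by_cases hxs : x ∈ s <;> simp [hxs, hx]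

variable [Fact (1 ≤ p)]

/-- Multiplication by `g ∈ L^∞(μ|_s)` followed by extension by zero outside `s`. -/
noncomputable def indicatorMulLp (hs : MeasurableSet s) (hsν : μ.restrict s ≤ ν)
    (hg : MemLp g ∞ (μ.restrict s)) : Lp 𝕜 p ν →L[𝕜] Lp 𝕜 p μ :=
  LinearMap.mkContinuous
    { toFun v := (hg.indicator_mul hs hsν (Lp.memLp v)).toLp
      map_add' v w := by
        rw [← MemLp.toLp_add]
        refine MemLp.toLp_congr _ _
          ((indicator_mul_ae_eq_of_ae_eq hs hsν (Lp.coeFn_add v w)).trans ?_)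
        rw [mul_add, Set.indicator_add']
      map_smul' c v := by
        rw [RingHom.id_apply, ← MemLp.toLp_const_smul]
        refine MemLp.toLp_congr _ _
          ((indicator_mul_ae_eq_of_ae_eq hs hsν (Lp.coeFn_smul c v)).trans ?_)
        rw [mul_smul_comm]
        exact EventuallyEq.of_eq (Set.indicator_const_smul s c _) }
    (eLpNorm g ∞ (μ.restrict s)).toReal
    fun v => by
      change ‖(hg.indicator_mul hs hsν (Lp.memLp v)).toLp‖ ≤ _
      rw [Lp.norm_toLp, Lp.norm_def, ← ENNReal.toReal_mul]
      exact ENNReal.toReal_mono (ENNReal.mul_ne_top hg.2.ne (Lp.eLpNorm_ne_top v))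
        (eLpNorm_indicator_mul_le hs hsν g (Lp.aestronglyMeasurable v))

theorem coeFn_indicatorMulLp (hs : MeasurableSet s) (hsν : μ.restrict s ≤ ν)
    (hg : MemLp g ∞ (μ.restrict s)) (v : Lp 𝕜 p ν) :
    indicatorMulLp hs hsν hg v =ᵐ[μ] s.indicator (g * ⇑v) :=
  MemLp.coeFn_toLp (hg.indicator_mul hs hsν (Lp.memLp v))

theorem eLpNorm_sub_indicatorMulLp_le (hs : MeasurableSet s) (hsν : μ.restrict s ≤ ν)
    {h k F : α → 𝕜} (hg : MemLp (k * h) ∞ (μ.restrict s)) {f : Lp 𝕜 p μ} {v : Lp 𝕜 p ν}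
    (hf : f =ᵐ[μ] k * (h * F)) (hv : v =ᵐ[ν] F) (hkF : AEStronglyMeasurable (k * F) μ) :
    eLpNorm ⇑(f - indicatorMulLp hs hsν hg v) p μ ≤
      eLpNorm h ∞ (μ.restrict sᶜ) * eLpNorm (k * F) p μ := by
  have hdiff : ⇑(f - indicatorMulLp hs hsν hg v) =ᵐ[μ] sᶜ.indicator (h * (k * F)) := by
    filter_upwards [Lp.coeFn_sub f (indicatorMulLp hs hsν hg v), hf,
      coeFn_indicatorMulLp hs hsν hg v, indicator_mul_ae_eq_of_ae_eq (g := k * h) hs hsν hv]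
      with x hsub hfx hvx hFx
    rw [hsub, Pi.sub_apply, hfx, hvx, hFx]
    by_cases hx : x ∈ s
    · simp [hx, mul_assoc]
    · simp [hx, mul_left_comm]
  rw [eLpNorm_congr_ae hdiff]
  exact eLpNorm_indicator_mul_le hs.compl Measure.restrict_le_self h hkF

end MeasureTheory

theorem stmt5_general
    (r₁ r₂ : ℝ)
    (Ω : Set (EuclideanSpace ℝ (Fin 3)))
    (rseq : ℕ → ℝ) (hrseq_mem : ∀ n, rseq n ∈ Set.Ioo r₁ r₂)
    (hrseq_lim : Tendsto rseq atTop (nhds r₂))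
    (η₁ η₂ : EuclideanSpace ℝ (Fin 3) → ℂ)
    (hη₁meas : Measurable η₁)
    (hη₁loc : ∀ n : ℕ,
      eLpNorm η₁ ⊤
        (volume.restrict (Ω ∩ Metric.ball (0 : EuclideanSpace ℝ (Fin 3)) (rseq n))) < ⊤)
    (hη₂meas : Measurable η₂)
    (hη₂bdd : eLpNorm η₂ ⊤ (volume.restrict Ω) < ⊤)
    (hη₂lim : Tendsto
      (fun r : ℝ =>
        eLpNorm η₂ ⊤ (volume.restrict (Ω \ Metric.ball (0 : EuclideanSpace ℝ (Fin 3)) r)))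
      (nhdsWithin r₂ (Set.Iio r₂)) (nhds 0))
    (Y : Type*) [NormedAddCommGroup Y] [InnerProductSpace ℂ Y] [CompleteSpace Y]
    (ι : Y →ₗ[ℂ] Lp ℂ 2 (volume.restrict Ω))
    (C : ℝ) (hC : 0 < C)
    (hbound : ∀ u : Y,
      eLpNorm (fun x => η₁ x * (ι u : EuclideanSpace ℝ (Fin 3) → ℂ) x) 2 (volume.restrict Ω)
        ≤ ENNReal.ofReal (C * ‖u‖))
    (Kres : ∀ n : ℕ,
      Y →ₗ[ℂ] Lp ℂ 2
        (volume.restrict (Ω ∩ Metric.ball (0 : EuclideanSpace ℝ (Fin 3)) (rseq n))))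
    (hKres : ∀ (n : ℕ) (u : Y),
      (Kres n u : EuclideanSpace ℝ (Fin 3) → ℂ)
        =ᵐ[volume.restrict (Ω ∩ Metric.ball (0 : EuclideanSpace ℝ (Fin 3)) (rseq n))]
          (ι u : EuclideanSpace ℝ (Fin 3) → ℂ))
    (hKcomp : ∀ n : ℕ, IsCompactOperator (Kres n))
    (K : Y →ₗ[ℂ] Lp ℂ 2 (volume.restrict Ω))
    (hK : ∀ u : Y,
      (K u : EuclideanSpace ℝ (Fin 3) → ℂ) =ᵐ[volume.restrict Ω]
        fun x => η₁ x * (η₂ x * (ι u : EuclideanSpace ℝ (Fin 3) → ℂ) x)) :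
    IsCompactOperator K := by
  set B : ℕ → Set (EuclideanSpace ℝ (Fin 3)) := fun n => Metric.ball 0 (rseq n)
  have hB (n : ℕ) : (volume.restrict Ω).restrict (B n) = volume.restrict (Ω ∩ B n) := by
    rw [Measure.restrict_restrict measurableSet_ball, Set.inter_comm]
  have hBc (n : ℕ) : (volume.restrict Ω).restrict (B n)ᶜ = volume.restrict (Ω \ B n) := by
    rw [Measure.restrict_restrict measurableSet_ball.compl, Set.inter_comm, Set.sdiff_eq]
  have hη₂ (t : Set _) : eLpNorm η₂ ∞ ((volume.restrict Ω).restrict t) ≠ ∞ :=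
    ((eLpNorm_mono_measure _ Measure.restrict_le_self).trans_lt hη₂bdd).ne
  have hη (n : ℕ) : MemLp (η₁ * η₂) ∞ ((volume.restrict Ω).restrict (B n)) :=
    MemLp.mul ⟨hη₂meas.aestronglyMeasurable, (hη₂ _).lt_top⟩
      ⟨hη₁meas.aestronglyMeasurable, hB n ▸ hη₁loc n⟩
  let M (n : ℕ) := indicatorMulLp (p := 2) measurableSet_ball (hB n).le (hη n)
  refine K.isCompactOperator_of_tendsto_of_norm_sub_le (T := fun n => (M n).toLinearMap ∘ₗ Kres n)
    (l := atTop) (fun n => (hKcomp n).clm_comp (M n))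
    (ε := fun n => (eLpNorm η₂ ∞ ((volume.restrict Ω).restrict (B n)ᶜ)).toReal * C) ?_ ?_
  · have hrseq : Tendsto rseq atTop (𝓝[<] r₂) :=
      tendsto_nhdsWithin_of_tendsto_nhds_of_eventually_within rseq hrseq_lim
        (.of_forall fun n => (hrseq_mem n).2)
    simp_rw [hBc]
    simpa using ((ENNReal.tendsto_toReal ENNReal.zero_ne_top).comp (hη₂lim.comp hrseq)).mul_const C
  · intro n u
    have htail := eLpNorm_sub_indicatorMulLp_le measurableSet_ball (hB n).le (hη n) (hK u)
      (hKres n u) (hη₁meas.aestronglyMeasurable.mul (Lp.aestronglyMeasurable (ι u)))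
    rw [Lp.norm_def, mul_assoc]
    refine ENNReal.toReal_le_of_le_ofReal (by positivity) (htail.trans ?_)
    rw [ENNReal.ofReal_mul ENNReal.toReal_nonneg, ENNReal.ofReal_toReal (hη₂ _)]
    gcongr
    exact hbound u

/-- Lemma 6.1: let `0 < r₁* < r₂*`, `Ω_e ⊆ B_{r₂*}` measurable, `(rₙ) ⊂ (r₁*, r₂*)`
monotonically increasing with limit `r₂*`, `η₁` measurable and essentially bounded on each
`Ω_e ∩ B_{rₙ}`, `Y` a Hilbert space with a linear map `ι : Y → L²(Ω_e)` such that
`‖η₁·ι(u)‖_{L²(Ω_e)} ≤ C‖u‖` and such that each restriction `Kₙ : Y → L²(Ω_e ∩ B_{rₙ})`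
(given as a linear map agreeing a.e. with `ι`) is compact, and `η₂ ∈ L^∞(Ω_e)` with
`‖η₂‖_{L^∞(Ω_e \ B_r)} → 0` as `r → r₂*⁻`. Then the multiplication-and-embedding operator
`K : Y → L²(Ω_e)`, `u ↦ η₁·η₂·ι(u)`, is compact. -/
theorem stmt5
    (r₁ r₂ : ℝ) (hr₁ : 0 < r₁) (hr₁₂ : r₁ < r₂)
    (Ω : Set (EuclideanSpace ℝ (Fin 3))) (hΩ : MeasurableSet Ω)
    (hΩsub : Ω ⊆ Metric.ball (0 : EuclideanSpace ℝ (Fin 3)) r₂)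
    (rseq : ℕ → ℝ) (hrseq_mem : ∀ n, rseq n ∈ Set.Ioo r₁ r₂)
    (hrseq_mono : Monotone rseq) (hrseq_lim : Tendsto rseq atTop (nhds r₂))
    (η₁ η₂ : EuclideanSpace ℝ (Fin 3) → ℂ)
    (hη₁meas : Measurable η₁)
    (hη₁loc : ∀ n : ℕ,
      eLpNorm η₁ ⊤
        (volume.restrict (Ω ∩ Metric.ball (0 : EuclideanSpace ℝ (Fin 3)) (rseq n))) < ⊤)
    (hη₂meas : Measurable η₂)
    (hη₂bdd : eLpNorm η₂ ⊤ (volume.restrict Ω) < ⊤)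
    (hη₂lim : Tendsto
      (fun r : ℝ =>
        eLpNorm η₂ ⊤ (volume.restrict (Ω \ Metric.ball (0 : EuclideanSpace ℝ (Fin 3)) r)))
      (nhdsWithin r₂ (Set.Iio r₂)) (nhds 0))
    (Y : Type*) [NormedAddCommGroup Y] [InnerProductSpace ℂ Y] [CompleteSpace Y]
    (ι : Y →ₗ[ℂ] Lp ℂ 2 (volume.restrict Ω))
    (C : ℝ) (hC : 0 < C)
    (hbound : ∀ u : Y,
      eLpNorm (fun x => η₁ x * (ι u : EuclideanSpace ℝ (Fin 3) → ℂ) x) 2 (volume.restrict Ω)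
        ≤ ENNReal.ofReal (C * ‖u‖))
    (Kres : ∀ n : ℕ,
      Y →ₗ[ℂ] Lp ℂ 2
        (volume.restrict (Ω ∩ Metric.ball (0 : EuclideanSpace ℝ (Fin 3)) (rseq n))))
    (hKres : ∀ (n : ℕ) (u : Y),
      (Kres n u : EuclideanSpace ℝ (Fin 3) → ℂ)
        =ᵐ[volume.restrict (Ω ∩ Metric.ball (0 : EuclideanSpace ℝ (Fin 3)) (rseq n))]
          (ι u : EuclideanSpace ℝ (Fin 3) → ℂ))
    (hKcomp : ∀ n : ℕ, IsCompactOperator (Kres n))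
    (K : Y →ₗ[ℂ] Lp ℂ 2 (volume.restrict Ω))
    (hK : ∀ u : Y,
      (K u : EuclideanSpace ℝ (Fin 3) → ℂ) =ᵐ[volume.restrict Ω]
        fun x => η₁ x * (η₂ x * (ι u : EuclideanSpace ℝ (Fin 3) → ℂ) x)) :
    IsCompactOperator K :=
  stmt5_general r₁ r₂ Ω rseq hrseq_mem hrseq_lim η₁ η₂ hη₁meas hη₁loc hη₂meas hη₂bdd hη₂lim Y ι C hC
    hbound Kres hKres hKcomp K hK
end

section
/- (Coefficient sector claim in the proof of Theorem 3.1, first case) Suppose Assumptions 2.1 and 3.1 hold, let τ ∈ (0, π/2) be such that arg( d(r)/d̃(r) ) ∈ [0, τ] for all r > r₁* (Lemma 3.1), and let ω ∈ ℂ \ {0} satisfy arg(−ω²d₀²) ∈ (−π, 0). Set τ₁ := min{ −2τ, −arg d̂(r₁*), arg(−ω²d₀²) }. Then τ₁ ∈ (−π, 0) and for every r ≥ 0: arg( d̃(r)²·|d̂(r)| / ( d(r)·d̂(r) ) ) ∈ [τ₁, 0] and arg( d(r)·|d̂(r)| / d̂(r) ) ∈ [τ₁, 0]. -/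
/-! On `[0, r₁*]` both quantities equal `|d̂(r₁*)| / d̂(r₁*)`, of argument `-arg d̂(r₁*) ≤ 0`,
because `α̂(r₁*) = lim α ≥ lim α̃ ≥ 0`. Beyond `r₁*` one has `d̂ = d`: the second quantity is the
positive real `|d|` and the first is `|d| · (d̃/d)²`, of argument `-2 arg(d/d̃) ∈ [-2τ, 0]`.
The inequality `α̃ ≤ α` is read off from `arg(d/d̃) ≥ 0`, since `Im(d/d̃) = (α - α̃)/|d̃|²`. -/

open Filter Set MeasureTheory

namespace Complex

theorem arg_norm_div_self {z : ℂ} (hz : z.arg ≠ Real.pi) : ((‖z‖ : ℂ) / z).arg = -z.arg := by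
  rcases eq_or_ne z 0 with rfl | hz₀
  · simp
  rw [div_eq_mul_inv, arg_real_mul _ (norm_pos_iff.mpr hz₀), arg_inv, if_neg hz]

theorem arg_mul_norm_div_self (z : ℂ) : (z * ‖z‖ / z).arg = 0 := by
  rcases eq_or_ne z 0 with rfl | hz
  · simp
  rw [mul_div_cancel_left₀ _ hz, arg_ofReal_of_nonneg (norm_nonneg z)]

theorem arg_inv_sq {p : ℂ} (h : |p.arg| < Real.pi / 2) : (p⁻¹ ^ 2).arg = -(2 * p.arg) := by
  rcases eq_or_ne p 0 with rfl | hp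
  · simp
  obtain ⟨hlo, hhi⟩ := abs_lt.mp h
  have hinv : p⁻¹.arg = -p.arg := by
    rw [arg_inv, if_neg (by linarith [Real.pi_pos])]
  rw [sq, arg_mul (inv_ne_zero hp) (inv_ne_zero hp) ⟨by linarith, by linarith⟩, hinv]
  ring

theorem arg_sq_mul_norm_div_mul_self {z w : ℂ} (h : |(z / w).arg| < Real.pi / 2) :
    (w ^ 2 * ‖z‖ / (z * z)).arg = -(2 * (z / w).arg) := by
  rcases eq_or_ne z 0 with rfl | hz
  · simp
  rcases eq_or_ne w 0 with rfl | hw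
  · simp
  have : w ^ 2 * ‖z‖ / (z * z) = ‖z‖ * (z / w)⁻¹ ^ 2 := by field_simp
  rw [this, arg_real_mul _ (norm_pos_iff.mpr hz), arg_inv_sq h]

end Complex

open Complex

theorem dtil_re (f : ℝ → ℝ) (r : ℝ) : (dtil f r).re = 1 := by simp [dtil]

theorem dtil_im (f : ℝ → ℝ) (r : ℝ) : (dtil f r).im = f r := by simp [dtil]

theorem dtil_ne_zero (f : ℝ → ℝ) (r : ℝ) : dtil f r ≠ 0 := fun h => by
  simpa [dtil_re] using congrArg re h

theorem dtil_eq_one {f : ℝ → ℝ} {r : ℝ} (h : f r = 0) : dtil f r = 1 := by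
  simp [dtil, h]

theorem dfun_eq_one_of_le {r₁ r : ℝ} (αt : ℝ → ℝ) (hr : r ≤ r₁) : dfun r₁ αt r = 1 := by
  simp [dfun, afun, not_lt.mpr hr]

theorem arg_dtil_mem_Ioo (f : ℝ → ℝ) (r : ℝ) :
    (dtil f r).arg ∈ Ioo (-(Real.pi / 2)) (Real.pi / 2) :=
  abs_lt.mp (abs_arg_lt_pi_div_two_iff.mpr (Or.inl (by rw [dtil_re]; exact one_pos)))

theorem arg_dtil_nonneg {f : ℝ → ℝ} {r : ℝ} (h : 0 ≤ f r) : 0 ≤ (dtil f r).arg :=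
  arg_nonneg_iff.mpr (by rwa [dtil_im])

theorem arg_dtil_div_dtil_nonneg_iff (f g : ℝ → ℝ) (r : ℝ) :
    0 ≤ (dtil g r / dtil f r).arg ↔ f r ≤ g r := by
  rw [arg_nonneg_iff, div_im, dtil_re, dtil_re, dtil_im, dtil_im, mul_one, one_mul, sub_nonneg]
  exact div_le_div_iff_of_pos_right (normSq_pos.mpr (dtil_ne_zero f r))

/-- `αh` encodes `α̂`: it equals the right limit `A` of `α` at `r₁*` on `[0, r₁*]`, and
`d̂ = dtil αh`. -/
theorem stmt9_general (r₁ : ℝ) (αt : ℝ → ℝ)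
    (h21 : Assumption21 r₁ αt)
    (d₀ : ℂ)
    (τ : ℝ) (hτ : τ ∈ Set.Ioo 0 (Real.pi / 2))
    (hτarg : ∀ r, r₁ < r → (dfun r₁ αt r / dtil αt r).arg ∈ Set.Icc 0 τ)
    (A : ℝ) (hA : Tendsto (afun r₁ αt) (nhdsWithin r₁ (Set.Ioi r₁)) (nhds A))
    (αh : ℝ → ℝ)
    (hαh₁ : ∀ r, 0 ≤ r → r ≤ r₁ → αh r = A)
    (hαh₂ : ∀ r, r₁ < r → αh r = afun r₁ αt r)
    (ω : ℂ)
    (hargω : (-(ω ^ 2 * d₀ ^ 2)).arg ∈ Set.Ioo (-Real.pi) 0) :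
    min (min (-(2 * τ)) (-(dtil αh r₁).arg)) (-(ω ^ 2 * d₀ ^ 2)).arg ∈ Set.Ioo (-Real.pi) 0 ∧
    ∀ r, 0 ≤ r →
      ((dtil αt r) ^ 2 * (‖dtil αh r‖ : ℂ) / (dfun r₁ αt r * dtil αh r)).arg ∈
        Set.Icc (min (min (-(2 * τ)) (-(dtil αh r₁).arg)) (-(ω ^ 2 * d₀ ^ 2)).arg) 0 ∧
      (dfun r₁ αt r * (‖dtil αh r‖ : ℂ) / dtil αh r).arg ∈
        Set.Icc (min (min (-(2 * τ)) (-(dtil αh r₁).arg)) (-(ω ^ 2 * d₀ ^ 2)).arg) 0 := by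
  obtain ⟨hτ₀, hτπ⟩ := hτ
  have hr₁ : 0 ≤ r₁ := h21.r₁_pos.le
  have hA₀ : 0 ≤ A := by
    refine ge_of_tendsto hA (eventually_nhdsWithin_of_forall fun r hr => ?_)
    have hαt_le : αt r ≤ afun r₁ αt r := (arg_dtil_div_dtil_nonneg_iff _ _ r).mp (hτarg r hr).1
    exact (h21.pos r hr).le.trans hαt_le
  have harg_hat : 0 ≤ (dtil αh r₁).arg := arg_dtil_nonneg (by rwa [hαh₁ r₁ hr₁ le_rfl])
  have harg_hat_lt := (arg_dtil_mem_Ioo αh r₁).2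
  set τ₁ := min (min (-(2 * τ)) (-(dtil αh r₁).arg)) (-(ω ^ 2 * d₀ ^ 2)).arg
  have hτ₁_le_τ : τ₁ ≤ -(2 * τ) := (min_le_left _ _).trans (min_le_left _ _)
  have hτ₁_le_hat : τ₁ ≤ -(dtil αh r₁).arg := (min_le_left _ _).trans (min_le_right _ _)
  have hτ₁ : τ₁ ∈ Ioo (-Real.pi) 0 :=
    ⟨lt_min (lt_min (by linarith) (by linarith)) hargω.1, min_lt_of_right_lt hargω.2⟩
  refine ⟨hτ₁, fun r hr => ?_⟩
  rcases le_or_gt r r₁ with hr_le | hr_gt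
  · have hhat : dtil αh r = dtil αh r₁ := by
      simp only [dtil, hαh₁ r hr hr_le, hαh₁ r₁ hr₁ le_rfl]
    rw [dtil_eq_one (h21.eq_zero r hr hr_le), dfun_eq_one_of_le αt hr_le, hhat, one_pow, one_mul,
      one_mul, arg_norm_div_self (by linarith [Real.pi_pos])]
    exact ⟨⟨hτ₁_le_hat, neg_nonpos.mpr harg_hat⟩, ⟨hτ₁_le_hat, neg_nonpos.mpr harg_hat⟩⟩
  · have hhat : dtil αh r = dfun r₁ αt r := by simp only [dtil, dfun, hαh₂ r hr_gt]
    obtain ⟨hq₀, hqτ⟩ := hτarg r hr_gt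
    have hq : |(dfun r₁ αt r / dtil αt r).arg| < Real.pi / 2 :=
      abs_lt.mpr ⟨by linarith, by linarith⟩
    rw [hhat, arg_sq_mul_norm_div_mul_self hq, arg_mul_norm_div_self]
    exact ⟨⟨by linarith, by linarith⟩, ⟨hτ₁.2.le, le_rfl⟩⟩

/-- Coefficient sector claim in the proof of Theorem 3.1, first case.
Here `αh` plays the role of `α̂` (equal to the right limit `A` of `α` at `r₁*` on `[0, r₁*]`
and to `α` beyond `r₁*`), and `d̂ = dtil αh`. With
`τ₁ = min{−2τ, −arg d̂(r₁*), arg(−ω²d₀²)}` one has `τ₁ ∈ (−π, 0)` and, for every `r ≥ 0`,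
`arg(d̃(r)²·|d̂(r)|/(d(r)·d̂(r))) ∈ [τ₁, 0]` and `arg(d(r)·|d̂(r)|/d̂(r)) ∈ [τ₁, 0]`. -/
theorem stmt9 (r₁ : ℝ) (αt : ℝ → ℝ)
    (h21 : Assumption21 r₁ αt) (h31 : Assumption31 r₁ αt)
    (d₀ : ℂ)
    (hd₀ : Tendsto (fun r => dtil αt r / (‖dtil αt r‖ : ℂ)) atTop (nhds d₀))
    (τ : ℝ) (hτ : τ ∈ Set.Ioo 0 (Real.pi / 2))
    (hτarg : ∀ r, r₁ < r → (dfun r₁ αt r / dtil αt r).arg ∈ Set.Icc 0 τ)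
    (A : ℝ) (hA : Tendsto (afun r₁ αt) (nhdsWithin r₁ (Set.Ioi r₁)) (nhds A))
    (αh : ℝ → ℝ)
    (hαh₁ : ∀ r, 0 ≤ r → r ≤ r₁ → αh r = A)
    (hαh₂ : ∀ r, r₁ < r → αh r = afun r₁ αt r)
    (ω : ℂ) (hω : ω ≠ 0)
    (hargω : (-(ω ^ 2 * d₀ ^ 2)).arg ∈ Set.Ioo (-Real.pi) 0) :
    min (min (-(2 * τ)) (-(dtil αh r₁).arg)) (-(ω ^ 2 * d₀ ^ 2)).arg ∈ Set.Ioo (-Real.pi) 0 ∧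
    ∀ r, 0 ≤ r →
      ((dtil αt r) ^ 2 * (‖dtil αh r‖ : ℂ) / (dfun r₁ αt r * dtil αh r)).arg ∈
        Set.Icc (min (min (-(2 * τ)) (-(dtil αh r₁).arg)) (-(ω ^ 2 * d₀ ^ 2)).arg) 0 ∧
      (dfun r₁ αt r * (‖dtil αh r‖ : ℂ) / dtil αh r).arg ∈
        Set.Icc (min (min (-(2 * τ)) (-(dtil αh r₁).arg)) (-(ω ^ 2 * d₀ ^ 2)).arg) 0 :=
  stmt9_general r₁ αt h21 d₀ τ hτ hτarg A hA αh hαh₁ hαh₂ ω hargω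
end
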